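/- arXiv:1704.04978 — 7 statements merged into one kernel-verified Lean document; each statement's English description precedes it below -/
import Mathlib

section
/- Let τ : I → ℝ be continuous on an open interval I and let v, w : I → ℝ be differentiable functions satisfying v' + τ·w = 0, w' + τ·v = 0, and v(s)² - w(s)² = 1 for all s ∈ I. Then there exists a constant c such that either v(s) = cosh(∫τ ds + c) and w(s) = -sinh(∫τ ds + c) for all s, or v(s) = -cosh(∫τ ds + c) and w(s) = sinh(∫τ ds + c) for all s. -/
/-!
Rotating `(v, w)` by the hyperbolic angle `-F` gives
`a = v cosh F + w sinh F` and `b = v sinh F + w cosh F`; the ODE system together with `F' = τ`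
makes `a' = b' = 0`, so `(a, b)` is a constant point `(A, B)` of the hyperbola `A² - B² = 1`.
Writing `A = ± cosh c`, `B = ∓ sinh c` and rotating back gives `(v, w) = ± (cosh, -sinh) (F + c)`.
-/

open Real

theorem Convex.eq_of_forall_hasDerivAt_zero {E : Type*} [NormedAddCommGroup E] [NormedSpace ℝ E]
    {s : Set ℝ} (hs : Convex ℝ s) {f : ℝ → E} (hf : ∀ x ∈ s, HasDerivAt f 0 x) {x y : ℝ}
    (hx : x ∈ s) (hy : y ∈ s) : f x = f y := by
  simpa [sub_eq_zero, eq_comm] using hs.norm_image_sub_le_of_norm_hasDerivWithin_le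
    (fun z hz => (hf z hz).hasDerivWithinAt) (fun _ _ => norm_zero.le) hx hy

section HyperbolicRotation

variable {v w F : ℝ → ℝ} {τ' s : ℝ}

theorem hasDerivAt_cosh_rotation_zero (hF : HasDerivAt F τ' s)
    (hv : HasDerivAt v (-(τ' * w s)) s) (hw : HasDerivAt w (-(τ' * v s)) s) :
    HasDerivAt (fun s => v s * cosh (F s) + w s * sinh (F s)) 0 s :=
  ((hv.mul hF.cosh).add (hw.mul hF.sinh)).congr_deriv (by ring)

theorem hasDerivAt_sinh_rotation_zero (hF : HasDerivAt F τ' s)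
    (hv : HasDerivAt v (-(τ' * w s)) s) (hw : HasDerivAt w (-(τ' * v s)) s) :
    HasDerivAt (fun s => v s * sinh (F s) + w s * cosh (F s)) 0 s :=
  ((hv.mul hF.sinh).add (hw.mul hF.cosh)).congr_deriv (by ring)

end HyperbolicRotation

theorem rotation_sq_sub_sq (v w t : ℝ) :
    (v * cosh t + w * sinh t) ^ 2 - (v * sinh t + w * cosh t) ^ 2 = v ^ 2 - w ^ 2 := by
  linear_combination (v ^ 2 - w ^ 2) * cosh_sq_sub_sinh_sq t

theorem eq_cosh_add_of_rotation {v w t c : ℝ} (ha : v * cosh t + w * sinh t = cosh c)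
    (hb : v * sinh t + w * cosh t = -sinh c) : v = cosh (t + c) ∧ w = -sinh (t + c) := by
  rw [cosh_add, sinh_add]
  constructor
  · linear_combination (-v) * cosh_sq_sub_sinh_sq t + cosh t * ha - sinh t * hb
  · linear_combination (-w) * cosh_sq_sub_sinh_sq t - sinh t * ha + cosh t * hb

theorem exists_cosh_sinh_of_sq_sub_sq_eq_one {A B : ℝ} (h : A ^ 2 - B ^ 2 = 1) :
    ∃ c, (A = cosh c ∧ B = -sinh c) ∨ (A = -cosh c ∧ B = sinh c) := by
  have hA : A ≠ 0 := by rintro rfl; nlinarith [sq_nonneg B]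
  rcases hA.lt_or_gt with hneg | hpos
  · refine ⟨arsinh B, Or.inr ⟨?_, (sinh_arsinh B).symm⟩⟩
    rw [cosh_arsinh, show 1 + B ^ 2 = (-A) ^ 2 by linarith, sqrt_sq (by linarith)]
    ring
  · refine ⟨arsinh (-B), Or.inl ⟨?_, by rw [sinh_arsinh]; ring⟩⟩
    rw [cosh_arsinh, show 1 + (-B) ^ 2 = A ^ 2 by linarith, sqrt_sq hpos.le]

theorem stmt_1_general (I : Set ℝ) (hI' : I.OrdConnected)
    (τ v w F : ℝ → ℝ)
    (hF : ∀ s ∈ I, HasDerivAt F (τ s) s)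
    (hv : ∀ s ∈ I, HasDerivAt v (-(τ s * w s)) s)
    (hw : ∀ s ∈ I, HasDerivAt w (-(τ s * v s)) s)
    (hnorm : ∀ s ∈ I, v s ^ 2 - w s ^ 2 = 1) :
    ∃ c : ℝ,
      (∀ s ∈ I, v s = Real.cosh (F s + c) ∧ w s = -Real.sinh (F s + c)) ∨
      (∀ s ∈ I, v s = -Real.cosh (F s + c) ∧ w s = Real.sinh (F s + c)) := by
  rcases I.eq_empty_or_nonempty with rfl | ⟨s₀, hs₀⟩
  · exact ⟨0, Or.inl fun s hs => hs.elim⟩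
  set a := fun s => v s * cosh (F s) + w s * sinh (F s)
  set b := fun s => v s * sinh (F s) + w s * cosh (F s)
  have ha : ∀ s ∈ I, a s = a s₀ := fun s hs => hI'.convex.eq_of_forall_hasDerivAt_zero
    (fun t ht => hasDerivAt_cosh_rotation_zero (hF t ht) (hv t ht) (hw t ht)) hs hs₀
  have hb : ∀ s ∈ I, b s = b s₀ := fun s hs => hI'.convex.eq_of_forall_hasDerivAt_zero
    (fun t ht => hasDerivAt_sinh_rotation_zero (hF t ht) (hv t ht) (hw t ht)) hs hs₀
  have hab : a s₀ ^ 2 - b s₀ ^ 2 = 1 := (rotation_sq_sub_sq _ _ _).trans (hnorm s₀ hs₀)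
  obtain ⟨c, ⟨hA, hB⟩ | ⟨hA, hB⟩⟩ := exists_cosh_sinh_of_sq_sub_sq_eq_one hab
  · exact ⟨c, Or.inl fun s hs =>
      eq_cosh_add_of_rotation ((ha s hs).trans hA) ((hb s hs).trans hB)⟩
  · -- the second branch is the first one for `(-v, -w)`
    refine ⟨c, Or.inr fun s hs => ?_⟩
    have h := eq_cosh_add_of_rotation (v := -v s) (w := -w s) (t := F s) (c := c)
      (by linear_combination -(ha s hs) - hA) (by linear_combination -(hb s hs) - hB)
    exact ⟨by linarith [h.1], by linarith [h.2]⟩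

/-- ODE system (12): evolute-direction curves, spacelike type 1 donor, timelike X. -/
theorem stmt_1 (I : Set ℝ) (hI : IsOpen I) (hI' : I.OrdConnected)
    (τ v w F : ℝ → ℝ)
    (hτ : ContinuousOn τ I)
    (hF : ∀ s ∈ I, HasDerivAt F (τ s) s)
    (hv : ∀ s ∈ I, HasDerivAt v (-(τ s * w s)) s)
    (hw : ∀ s ∈ I, HasDerivAt w (-(τ s * v s)) s)
    (hnorm : ∀ s ∈ I, v s ^ 2 - w s ^ 2 = 1) :
    ∃ c : ℝ,
      (∀ s ∈ I, v s = Real.cosh (F s + c) ∧ w s = -Real.sinh (F s + c)) ∨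
      (∀ s ∈ I, v s = -Real.cosh (F s + c) ∧ w s = Real.sinh (F s + c)) :=
  stmt_1_general I hI' τ v w F hF hv hw hnorm
end

section
/- Let τ : I → ℝ be continuous on an open interval I and let v, w : I → ℝ be differentiable functions satisfying v' + τ·w = 0, w' + τ·v = 0, and w(s)² - v(s)² = 1 for all s ∈ I. Then there exists a constant c such that either v(s) = sinh(∫τ ds + c) and w(s) = -cosh(∫τ ds + c) for all s, or v(s) = -sinh(∫τ ds + c) and w(s) = cosh(∫τ ds + c) for all s. -/
/-!
The quantities `v cosh F + w sinh F` and `v sinh F + w cosh F` are first integrals of the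
system, since `F' = τ`. Inverting this hyperbolic rotation expresses `v` and `w` through two
constants `a`, `b` with `b² - a² = w² - v² = 1`, and writing `a = sinh c`, `b = ± cosh c` the
addition formulas for `sinh` and `cosh` give the two families of solutions.
-/

open Real

theorem IsOpen.exists_const_of_hasDerivAt_zero {𝕜 G : Type*} [RCLike 𝕜] [NormedAddCommGroup G]
    [NormedSpace 𝕜 G] {s : Set 𝕜} (hs : IsOpen s) (hs' : IsPreconnected s) {f : 𝕜 → G}
    (hf : ∀ x ∈ s, HasDerivAt f 0 x) : ∃ a, ∀ x ∈ s, f x = a :=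
  hs.exists_is_const_of_deriv_eq_zero hs'
    (fun x hx => (hf x hx).differentiableAt.differentiableWithinAt) fun x hx => (hf x hx).deriv

theorem exists_eq_hyperbolic_rotation_of_hasDerivAt {I : Set ℝ} (hI : IsOpen I)
    (hI' : IsPreconnected I) {τ v w F : ℝ → ℝ}
    (hF : ∀ s ∈ I, HasDerivAt F (τ s) s)
    (hv : ∀ s ∈ I, HasDerivAt v (-(τ s * w s)) s)
    (hw : ∀ s ∈ I, HasDerivAt w (-(τ s * v s)) s) :
    ∃ a b : ℝ, ∀ s ∈ I,
      v s = a * cosh (F s) - b * sinh (F s) ∧ w s = b * cosh (F s) - a * sinh (F s) := by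
  obtain ⟨a, ha⟩ := hI.exists_const_of_hasDerivAt_zero hI'
    (f := fun s => v s * cosh (F s) + w s * sinh (F s)) fun s hs =>
      (((hv s hs).mul (hF s hs).cosh).add ((hw s hs).mul (hF s hs).sinh)).congr_deriv (by ring)
  obtain ⟨b, hb⟩ := hI.exists_const_of_hasDerivAt_zero hI'
    (f := fun s => v s * sinh (F s) + w s * cosh (F s)) fun s hs =>
      (((hv s hs).mul (hF s hs).sinh).add ((hw s hs).mul (hF s hs).cosh)).congr_deriv (by ring)
  refine ⟨a, b, fun s hs => ⟨?_, ?_⟩⟩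
  · linear_combination
      cosh (F s) * ha s hs - sinh (F s) * hb s hs - v s * cosh_sq_sub_sinh_sq (F s)
  · linear_combination
      cosh (F s) * hb s hs - sinh (F s) * ha s hs - w s * cosh_sq_sub_sinh_sq (F s)

theorem exists_sinh_eq_and_eq_cosh_or_eq_neg_cosh {a b : ℝ} (hab : b ^ 2 - a ^ 2 = 1) :
    ∃ c, a = sinh c ∧ (b = cosh c ∨ b = -cosh c) := by
  refine ⟨arsinh a, (sinh_arsinh a).symm, sq_eq_sq_iff_eq_or_eq_neg.mp ?_⟩
  rw [cosh_sq, sinh_arsinh]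
  linarith

theorem stmt_2_general (I : Set ℝ) (hI : IsOpen I) (hI' : I.OrdConnected)
    (τ v w F : ℝ → ℝ)
    (hF : ∀ s ∈ I, HasDerivAt F (τ s) s)
    (hv : ∀ s ∈ I, HasDerivAt v (-(τ s * w s)) s)
    (hw : ∀ s ∈ I, HasDerivAt w (-(τ s * v s)) s)
    (hnorm : ∀ s ∈ I, w s ^ 2 - v s ^ 2 = 1) :
    ∃ c : ℝ,
      (∀ s ∈ I, v s = Real.sinh (F s + c) ∧ w s = -Real.cosh (F s + c)) ∨
      (∀ s ∈ I, v s = -Real.sinh (F s + c) ∧ w s = Real.cosh (F s + c)) := by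
  obtain ⟨a, b, hvw⟩ :=
    exists_eq_hyperbolic_rotation_of_hasDerivAt hI hI'.isPreconnected hF hv hw
  rcases I.eq_empty_or_nonempty with rfl | ⟨s₀, hs₀⟩
  · exact ⟨0, Or.inl (by simp)⟩
  have hab : b ^ 2 - a ^ 2 = 1 := by
    rw [← hnorm s₀ hs₀, (hvw s₀ hs₀).1, (hvw s₀ hs₀).2]
    linear_combination (a ^ 2 - b ^ 2) * cosh_sq_sub_sinh_sq (F s₀)
  obtain ⟨c, rfl, rfl | rfl⟩ := exists_sinh_eq_and_eq_cosh_or_eq_neg_cosh hab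
  · refine ⟨-c, Or.inr fun s hs => ?_⟩
    rw [(hvw s hs).1, (hvw s hs).2, ← sub_eq_add_neg, sinh_sub, cosh_sub]
    constructor <;> ring
  · refine ⟨c, Or.inl fun s hs => ?_⟩
    rw [(hvw s hs).1, (hvw s hs).2, sinh_add, cosh_add]
    constructor <;> ring

/-- ODE system (14): evolute-direction curves, normalization -v² + w² = 1. -/
theorem stmt_2 (I : Set ℝ) (hI : IsOpen I) (hI' : I.OrdConnected)
    (τ v w F : ℝ → ℝ)
    (hτ : ContinuousOn τ I)
    (hF : ∀ s ∈ I, HasDerivAt F (τ s) s)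
    (hv : ∀ s ∈ I, HasDerivAt v (-(τ s * w s)) s)
    (hw : ∀ s ∈ I, HasDerivAt w (-(τ s * v s)) s)
    (hnorm : ∀ s ∈ I, w s ^ 2 - v s ^ 2 = 1) :
    ∃ c : ℝ,
      (∀ s ∈ I, v s = Real.sinh (F s + c) ∧ w s = -Real.cosh (F s + c)) ∨
      (∀ s ∈ I, v s = -Real.sinh (F s + c) ∧ w s = Real.cosh (F s + c)) :=
  stmt_2_general I hI hI' τ v w F hF hv hw hnorm
end

section
/- Let κ, τ : I → ℝ be differentiable with κ and κ² - τ² nowhere zero, and define k̄ = κ cosh θ - τ sinh θ, τ̄ = -κ sinh θ + τ cosh θ for a constant θ with k̄ nowhere zero and k̄² - τ̄² nowhere zero. Then (κ²/(κ² - τ²)^{3/2}) · (τ/κ)' = (k̄²/(k̄² - τ̄²)^{3/2}) · (τ̄/k̄)' whenever κ² - τ² > 0 and k̄² - τ̄² > 0. -/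
/-!
Since `κ² (τ/κ)' = τ'κ - τκ'`, the slant-helix function is `(τ'κ - τκ') / (κ² - τ²)^{3/2}`.
A hyperbolic rotation of `(κ, τ)` by a constant angle has determinant `cosh² θ - sinh² θ = 1`,
so it preserves both the Lorentzian form `κ² - τ²` and the Wronskian `τ'κ - τκ'`.
-/

open Real Filter

theorem ne_zero_of_sq_sub_sq_pos {a b : ℝ} (h : 0 < a ^ 2 - b ^ 2) : a ≠ 0 := by
  rintro rfl
  nlinarith [sq_nonneg b]

theorem sq_mul_deriv_div {f g : ℝ → ℝ} {f' g' s : ℝ} (hf : HasDerivAt f f' s)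
    (hg : HasDerivAt g g' s) (hg0 : g s ≠ 0) :
    g s ^ 2 * deriv (fun t => f t / g t) s = f' * g s - f s * g' := by
  rw [(hf.fun_div hg hg0).deriv]
  field_simp

theorem hyperbolicRotation_sq_sub_sq (θ a b : ℝ) :
    (a * cosh θ - b * sinh θ) ^ 2 - (-a * sinh θ + b * cosh θ) ^ 2 = a ^ 2 - b ^ 2 := by
  linear_combination (a ^ 2 - b ^ 2) * cosh_sq_sub_sinh_sq θ

theorem hyperbolicRotation_wronskian (θ a b a' b' : ℝ) :
    (-a' * sinh θ + b' * cosh θ) * (a * cosh θ - b * sinh θ)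
        - (-a * sinh θ + b * cosh θ) * (a' * cosh θ - b' * sinh θ) = b' * a - b * a' := by
  linear_combination (b' * a - b * a') * cosh_sq_sub_sinh_sq θ

theorem stmt_9_general (I : Set ℝ) (hI : IsOpen I) (κ τ kb tb : ℝ → ℝ) (θ : ℝ)
    (hκd : ∀ s ∈ I, DifferentiableAt ℝ κ s)
    (hτd : ∀ s ∈ I, DifferentiableAt ℝ τ s)
    (hkb : ∀ s ∈ I, kb s = κ s * Real.cosh θ - τ s * Real.sinh θ)
    (htb : ∀ s ∈ I, tb s = -κ s * Real.sinh θ + τ s * Real.cosh θ) :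
    ∀ s ∈ I, κ s ^ 2 - τ s ^ 2 > 0 → kb s ^ 2 - tb s ^ 2 > 0 →
      κ s ^ 2 / (κ s ^ 2 - τ s ^ 2) ^ ((3 : ℝ) / 2) *
        deriv (fun t => τ t / κ t) s =
      kb s ^ 2 / (kb s ^ 2 - tb s ^ 2) ^ ((3 : ℝ) / 2) *
        deriv (fun t => tb t / kb t) s := by
  intro s hs hQ hQb
  have hκ := (hκd s hs).hasDerivAt
  have hτ := (hτd s hs).hasDerivAt
  have hkb' : HasDerivAt kb (deriv κ s * cosh θ - deriv τ s * sinh θ) s :=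
    ((hκ.mul_const _).sub (hτ.mul_const _)).congr_of_eventuallyEq
      (eventually_of_mem (hI.mem_nhds hs) hkb)
  have htb' : HasDerivAt tb (-deriv κ s * sinh θ + deriv τ s * cosh θ) s :=
    ((hκ.neg.mul_const _).add (hτ.mul_const _)).congr_of_eventuallyEq
      (eventually_of_mem (hI.mem_nhds hs) htb)
  rw [div_mul_eq_mul_div, div_mul_eq_mul_div,
    sq_mul_deriv_div hτ hκ (ne_zero_of_sq_sub_sq_pos hQ),
    sq_mul_deriv_div htb' hkb' (ne_zero_of_sq_sub_sq_pos hQb), hkb s hs, htb s hs,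
    hyperbolicRotation_sq_sub_sq, hyperbolicRotation_wronskian]

/-- Corollary 5.2, eq. (92): invariance of the slant-helix function under
hyperbolic rotation. -/
theorem stmt_9 (I : Set ℝ) (hI : IsOpen I) (κ τ kb tb : ℝ → ℝ) (θ : ℝ)
    (hκd : ∀ s ∈ I, DifferentiableAt ℝ κ s)
    (hτd : ∀ s ∈ I, DifferentiableAt ℝ τ s)
    (hκ : ∀ s ∈ I, κ s ≠ 0)
    (hQ : ∀ s ∈ I, κ s ^ 2 - τ s ^ 2 ≠ 0)
    (hkb : ∀ s ∈ I, kb s = κ s * Real.cosh θ - τ s * Real.sinh θ)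
    (htb : ∀ s ∈ I, tb s = -κ s * Real.sinh θ + τ s * Real.cosh θ)
    (hkb0 : ∀ s ∈ I, kb s ≠ 0)
    (hQb : ∀ s ∈ I, kb s ^ 2 - tb s ^ 2 ≠ 0) :
    ∀ s ∈ I, κ s ^ 2 - τ s ^ 2 > 0 → kb s ^ 2 - tb s ^ 2 > 0 →
      κ s ^ 2 / (κ s ^ 2 - τ s ^ 2) ^ ((3 : ℝ) / 2) *
        deriv (fun t => τ t / κ t) s =
      kb s ^ 2 / (kb s ^ 2 - tb s ^ 2) ^ ((3 : ℝ) / 2) *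
        deriv (fun t => tb t / kb t) s :=
  stmt_9_general I hI κ τ kb tb θ hκd hτd hkb htb
end

section
/- Let κ, τ : I → ℝ be differentiable with τ nowhere zero and sinh(∫κ ds) nowhere zero, and define k̄ = τ sinh(∫κ ds), τ̄ = -τ cosh(∫κ ds), where ∫κ is a fixed antiderivative of κ. Then τ̄² - k̄² = τ² > 0 and κ = (k̄²/(τ̄² - k̄²)) · (τ̄/k̄)'. -/
/-! On `I` the ratio `τ̄ / k̄` is `-coth (∫κ)`, whose derivative is `κ / sinh² (∫κ)`;
multiplying by `k̄² / (τ̄² - k̄²) = sinh² (∫κ)` gives back `κ`. -/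

open Real

lemma neg_mul_cosh_sq_sub_mul_sinh_sq (a x : ℝ) :
    (-(a * cosh x)) ^ 2 - (a * sinh x) ^ 2 = a ^ 2 := by
  linear_combination a ^ 2 * cosh_sq_sub_sinh_sq x

lemma HasDerivAt.neg_cosh_div_sinh {f : ℝ → ℝ} {f' x : ℝ} (hf : HasDerivAt f f' x)
    (hx : Real.sinh (f x) ≠ 0) :
    HasDerivAt (fun t => -(Real.cosh (f t) / Real.sinh (f t))) (f' / Real.sinh (f x) ^ 2) x := by
  refine (hf.cosh.div hf.sinh hx).neg.congr_deriv ?_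
  field_simp
  linear_combination f' * cosh_sq_sub_sinh_sq (f x)

theorem stmt_14_general (I : Set ℝ) (hI : IsOpen I) (κ τ F kb tb : ℝ → ℝ)
    (hτ : ∀ s ∈ I, τ s ≠ 0)
    (hF : ∀ s ∈ I, HasDerivAt F (κ s) s)
    (hsinh : ∀ s ∈ I, Real.sinh (F s) ≠ 0)
    (hkb : ∀ s ∈ I, kb s = τ s * Real.sinh (F s))
    (htb : ∀ s ∈ I, tb s = -(τ s * Real.cosh (F s))) :
    ∀ s ∈ I,
      tb s ^ 2 - kb s ^ 2 = τ s ^ 2 ∧ 0 < tb s ^ 2 - kb s ^ 2 ∧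
      κ s = kb s ^ 2 / (tb s ^ 2 - kb s ^ 2) * deriv (fun t => tb t / kb t) s := by
  intro s hs
  have hdiff : tb s ^ 2 - kb s ^ 2 = τ s ^ 2 := by
    rw [hkb s hs, htb s hs, neg_mul_cosh_sq_sub_mul_sinh_sq]
  have hratio : (fun t => tb t / kb t) =ᶠ[nhds s] fun t => -(cosh (F t) / sinh (F t)) := by
    filter_upwards [hI.mem_nhds hs] with t ht
    rw [hkb t ht, htb t ht, neg_div, mul_div_mul_left _ _ (hτ t ht)]
  refine ⟨hdiff, hdiff ▸ pow_two_pos_of_ne_zero (hτ s hs), ?_⟩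
  rw [hratio.deriv_eq, ((hF s hs).neg_cosh_div_sinh (hsinh s hs)).deriv, hdiff, hkb s hs]
  field_simp [hτ s hs, hsinh s hs]

/-- Theorem 4.2(i): curvatures of the timelike Mannheim-direction curve of a
timelike curve, and recovery of κ. -/
theorem stmt_14 (I : Set ℝ) (hI : IsOpen I) (κ τ F kb tb : ℝ → ℝ)
    (hκd : ∀ s ∈ I, DifferentiableAt ℝ κ s)
    (hτd : ∀ s ∈ I, DifferentiableAt ℝ τ s)
    (hτ : ∀ s ∈ I, τ s ≠ 0)
    (hF : ∀ s ∈ I, HasDerivAt F (κ s) s)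
    (hsinh : ∀ s ∈ I, Real.sinh (F s) ≠ 0)
    (hkb : ∀ s ∈ I, kb s = τ s * Real.sinh (F s))
    (htb : ∀ s ∈ I, tb s = -(τ s * Real.cosh (F s))) :
    ∀ s ∈ I,
      tb s ^ 2 - kb s ^ 2 = τ s ^ 2 ∧ 0 < tb s ^ 2 - kb s ^ 2 ∧
      κ s = kb s ^ 2 / (tb s ^ 2 - kb s ^ 2) * deriv (fun t => tb t / kb t) s :=
  stmt_14_general I hI κ τ F kb tb hτ hF hsinh hkb htb
end

section
/- Let κ, τ : I → ℝ be differentiable with τ nowhere zero, and define k̄ = τ cosh(∫κ ds), τ̄ = τ sinh(∫κ ds), where ∫κ is a fixed antiderivative of κ. Then k̄² - τ̄² = τ² > 0 and κ = (k̄²/(k̄² - τ̄²)) · (τ̄/k̄)'. -/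
/-!
Since `k̄ = τ cosh F` and `τ̄ = τ sinh F`, the identity `cosh² - sinh² = 1` gives `k̄² - τ̄² = τ²`,
and near each point of the open set `I` the quotient `τ̄ / k̄` is `tanh ∘ F` (the nonzero factor `τ`
cancels). Hence `(τ̄ / k̄)' = κ / cosh² F`, while `k̄² / (k̄² - τ̄²) = cosh² F`.
-/

open Real Topology

theorem mul_cosh_sq_sub_mul_sinh_sq (a x : ℝ) : (a * cosh x) ^ 2 - (a * sinh x) ^ 2 = a ^ 2 := by
  linear_combination a ^ 2 * cosh_sq_sub_sinh_sq x

theorem HasDerivAt.sinh_div_cosh {F : ℝ → ℝ} {F' x : ℝ} (hF : HasDerivAt F F' x) :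
    HasDerivAt (fun t => Real.sinh (F t) / Real.cosh (F t)) (F' / Real.cosh (F x) ^ 2) x := by
  refine (hF.sinh.div hF.cosh (cosh_pos (F x)).ne').congr_deriv ?_
  linear_combination F' / Real.cosh (F x) ^ 2 * cosh_sq_sub_sinh_sq (F x)

theorem stmt_15_general (I : Set ℝ) (hI : IsOpen I) (κ τ F kb tb : ℝ → ℝ)
    (hτ : ∀ s ∈ I, τ s ≠ 0)
    (hF : ∀ s ∈ I, HasDerivAt F (κ s) s)
    (hkb : ∀ s ∈ I, kb s = τ s * Real.cosh (F s))
    (htb : ∀ s ∈ I, tb s = τ s * Real.sinh (F s)) :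
    ∀ s ∈ I,
      kb s ^ 2 - tb s ^ 2 = τ s ^ 2 ∧ 0 < kb s ^ 2 - tb s ^ 2 ∧
      κ s = kb s ^ 2 / (kb s ^ 2 - tb s ^ 2) * deriv (fun t => tb t / kb t) s := by
  intro s hs
  have hdiff : kb s ^ 2 - tb s ^ 2 = τ s ^ 2 := by
    rw [hkb s hs, htb s hs, mul_cosh_sq_sub_mul_sinh_sq]
  have hquot : (fun t => tb t / kb t) =ᶠ[𝓝 s] fun t => sinh (F t) / cosh (F t) := by
    filter_upwards [hI.mem_nhds hs] with t ht
    rw [hkb t ht, htb t ht, mul_div_mul_left _ _ (hτ t ht)]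
  refine ⟨hdiff, hdiff ▸ sq_pos_of_ne_zero (hτ s hs), ?_⟩
  rw [hquot.deriv_eq, (hF s hs).sinh_div_cosh.deriv, hdiff, hkb s hs]
  field_simp [hτ s hs, (cosh_pos (F s)).ne']

/-- Theorem 4.2(ii): curvatures of the spacelike type 2 Mannheim-direction curve
of a timelike curve. -/
theorem stmt_15 (I : Set ℝ) (hI : IsOpen I) (κ τ F kb tb : ℝ → ℝ)
    (hκd : ∀ s ∈ I, DifferentiableAt ℝ κ s)
    (hτd : ∀ s ∈ I, DifferentiableAt ℝ τ s)
    (hτ : ∀ s ∈ I, τ s ≠ 0)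
    (hF : ∀ s ∈ I, HasDerivAt F (κ s) s)
    (hkb : ∀ s ∈ I, kb s = τ s * Real.cosh (F s))
    (htb : ∀ s ∈ I, tb s = τ s * Real.sinh (F s)) :
    ∀ s ∈ I,
      kb s ^ 2 - tb s ^ 2 = τ s ^ 2 ∧ 0 < kb s ^ 2 - tb s ^ 2 ∧
      κ s = kb s ^ 2 / (kb s ^ 2 - tb s ^ 2) * deriv (fun t => tb t / kb t) s :=
  stmt_15_general I hI κ τ F kb tb hτ hF hkb htb
end

section
/- Let κ, τ : I → ℝ be differentiable with κ nowhere zero and cos(∫τ ds) nowhere zero, and set k̄ = κ cos(∫τ ds), τ̄ = -κ sin(∫τ ds). If τ/κ is constant on I, then the function (k̄²/(k̄² + τ̄²)^{3/2}) · (τ̄/k̄)' is constant on I; conversely, if that function is constant, then τ/κ is constant. -/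
/-!
Along `I` the quotient `τ̄ / k̄` is `-tan (∫ τ)`, whose derivative is `-τ / cos² (∫ τ)`, while
`k̄² + τ̄² = κ²`. Hence the slant-helix invariant of `β` equals `-τ / |κ|` pointwise, and since
`κ` has constant sign on the interval `I`, this is a fixed nonzero multiple of `τ / κ`.
-/

open Topology

lemma Real.sq_mul_cos_add_sq_neg_mul_sin (a x : ℝ) :
    (a * Real.cos x) ^ 2 + (-(a * Real.sin x)) ^ 2 = a ^ 2 := by
  linear_combination a ^ 2 * Real.sin_sq_add_cos_sq x

lemma Real.sq_rpow_three_halves (x : ℝ) : (x ^ 2) ^ ((3 : ℝ) / 2) = |x| ^ 3 := by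
  rw [← sq_abs, ← Real.rpow_natCast |x| 2, ← Real.rpow_mul (abs_nonneg x),
    ← Real.rpow_natCast |x| 3]
  norm_num

lemma IsPreconnected.exists_abs_eq_mul {α : Type*} [TopologicalSpace α] {S : Set α}
    {f : α → ℝ} (hS : IsPreconnected S) (hf : ContinuousOn f S) (hf₀ : ∀ x ∈ S, f x ≠ 0) :
    ∃ σ : ℝ, σ ≠ 0 ∧ ∀ x ∈ S, |f x| = σ * f x := by
  rcases hS.eq_or_eq_neg_of_sq_eq hf.abs hf (fun x _ => sq_abs (f x)) (hf₀ _) with h | h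
  · exact ⟨1, one_ne_zero, fun x hx => (h hx).trans (one_mul _).symm⟩
  · exact ⟨-1, by norm_num, fun x hx => (h hx).trans (neg_one_mul _).symm⟩

lemma exists_forall_eq_const_iff_of_eq_mul {α : Type*} {S : Set α} {f g : α → ℝ} {σ : ℝ}
    (hσ : σ ≠ 0) (hfg : ∀ x ∈ S, f x = σ * g x) :
    (∃ c, ∀ x ∈ S, g x = c) ↔ ∃ c, ∀ x ∈ S, f x = c := by
  constructor
  · rintro ⟨c, hc⟩
    exact ⟨σ * c, fun x hx => by rw [hfg x hx, hc x hx]⟩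
  · rintro ⟨c, hc⟩
    refine ⟨c / σ, fun x hx => ?_⟩
    rw [eq_div_iff hσ, mul_comm, ← hfg x hx, hc x hx]

section EvoluteDirection

variable {I : Set ℝ} {κ τ F kb tb : ℝ → ℝ}
  (hκ : ∀ s ∈ I, κ s ≠ 0)
  (hkb : ∀ s ∈ I, kb s = κ s * Real.cos (F s))
  (htb : ∀ s ∈ I, tb s = -(κ s * Real.sin (F s)))

include hκ hkb htb in
lemma eventuallyEq_div_neg_tan (hI : IsOpen I) {s : ℝ} (hs : s ∈ I) :
    (fun t => tb t / kb t) =ᶠ[𝓝 s] fun t => -Real.tan (F t) := by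
  filter_upwards [hI.mem_nhds hs] with t ht
  rw [hkb t ht, htb t ht, Real.tan_eq_sin_div_cos, neg_div, mul_div_mul_left _ _ (hκ t ht)]

include hκ hkb htb in
lemma deriv_div_eq_neg_div_cos_sq (hI : IsOpen I) {s : ℝ} (hs : s ∈ I)
    (hF : HasDerivAt F (τ s) s) (hcos : Real.cos (F s) ≠ 0) :
    deriv (fun t => tb t / kb t) s = -(τ s / Real.cos (F s) ^ 2) := by
  have htan : HasDerivAt (fun t => -Real.tan (F t)) (-(1 / Real.cos (F s) ^ 2 * τ s)) s :=
    ((Real.hasDerivAt_tan hcos).comp s hF).neg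
  rw [(eventuallyEq_div_neg_tan hκ hkb htb hI hs).deriv_eq, htan.deriv, one_div_mul_eq_div]

include hκ hkb htb in
lemma slantHelixInvariant_eq_neg_div_abs (hI : IsOpen I) {s : ℝ} (hs : s ∈ I)
    (hF : HasDerivAt F (τ s) s) (hcos : Real.cos (F s) ≠ 0) :
    kb s ^ 2 / (kb s ^ 2 + tb s ^ 2) ^ ((3 : ℝ) / 2) * deriv (fun t => tb t / kb t) s =
      -(τ s / |κ s|) := by
  rw [deriv_div_eq_neg_div_cos_sq hκ hkb htb hI hs hF hcos, hkb s hs, htb s hs,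
    Real.sq_mul_cos_add_sq_neg_mul_sin, Real.sq_rpow_three_halves, mul_pow, ← sq_abs (κ s)]
  have hκs : |κ s| ≠ 0 := abs_ne_zero.mpr (hκ s hs)
  field_simp

end EvoluteDirection

theorem stmt_17_general (I : Set ℝ) (hI : IsOpen I) (hI' : I.OrdConnected)
    (κ τ F kb tb : ℝ → ℝ)
    (hκd : ∀ s ∈ I, DifferentiableAt ℝ κ s)
    (hκ : ∀ s ∈ I, κ s ≠ 0)
    (hF : ∀ s ∈ I, HasDerivAt F (τ s) s)
    (hcos : ∀ s ∈ I, Real.cos (F s) ≠ 0)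
    (hkb : ∀ s ∈ I, kb s = κ s * Real.cos (F s))
    (htb : ∀ s ∈ I, tb s = -(κ s * Real.sin (F s))) :
    (∃ c : ℝ, ∀ s ∈ I, τ s / κ s = c) ↔
    (∃ c : ℝ, ∀ s ∈ I,
      kb s ^ 2 / (kb s ^ 2 + tb s ^ 2) ^ ((3 : ℝ) / 2) *
        deriv (fun t => tb t / kb t) s = c) := by
  obtain ⟨σ, hσ, habs⟩ := hI'.isPreconnected.exists_abs_eq_mul
    (fun s hs => (hκd s hs).continuousAt.continuousWithinAt) hκ
  refine exists_forall_eq_const_iff_of_eq_mul (neg_ne_zero.mpr (inv_ne_zero hσ)) fun s hs => ?_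
  rw [slantHelixInvariant_eq_neg_div_abs hκ hkb htb hI hs (hF s hs) (hcos s hs), habs s hs]
  have hκs := hκ s hs
  field_simp

/-- Theorem 3.3 (analytic content): α is a general helix iff its evolute-direction
curve is a slant helix. -/
theorem stmt_17 (I : Set ℝ) (hI : IsOpen I) (hI' : I.OrdConnected)
    (κ τ F kb tb : ℝ → ℝ)
    (hκd : ∀ s ∈ I, DifferentiableAt ℝ κ s)
    (hτd : ∀ s ∈ I, DifferentiableAt ℝ τ s)
    (hκ : ∀ s ∈ I, κ s ≠ 0)
    (hF : ∀ s ∈ I, HasDerivAt F (τ s) s)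
    (hcos : ∀ s ∈ I, Real.cos (F s) ≠ 0)
    (hkb : ∀ s ∈ I, kb s = κ s * Real.cos (F s))
    (htb : ∀ s ∈ I, tb s = -(κ s * Real.sin (F s))) :
    (∃ c : ℝ, ∀ s ∈ I, τ s / κ s = c) ↔
    (∃ c : ℝ, ∀ s ∈ I,
      kb s ^ 2 / (kb s ^ 2 + tb s ^ 2) ^ ((3 : ℝ) / 2) *
        deriv (fun t => tb t / kb t) s = c) :=
  stmt_17_general I hI hI' κ τ F kb tb hκd hκ hF hcos hkb htb
end

section
/- Let κ, τ : I → ℝ be differentiable with κ nowhere zero and cos(∫τ ds) nowhere zero, and set k̄ = κ cos(∫τ ds), τ̄ = -κ sin(∫τ ds). Then τ ≡ 0 on I if and only if τ̄/k̄ is constant on I. -/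
/-!
On `I` the ratio `tb / kb` equals `-tan F`, where `F' = τ`. If `τ ≡ 0`, then `F` is constant
on the interval `I`. Conversely, if `tan ∘ F` is constant, its derivative `τ / cos² F` vanishes,
and `cos F ≠ 0` forces `τ = 0`.
-/

open Real Filter Topology

lemma neg_mul_sin_div_mul_cos {κ : ℝ} (hκ : κ ≠ 0) (x : ℝ) :
    -(κ * sin x) / (κ * cos x) = -tan x := by
  rw [tan_eq_sin_div_cos, neg_div, mul_div_mul_left _ _ hκ]

lemma HasDerivAt.eq_zero_of_comp_eventuallyEq_const {f g : ℝ → ℝ} {f' g' s c : ℝ}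
    (hf : HasDerivAt f f' s) (hg : HasDerivAt g g' (f s)) (hg' : g' ≠ 0)
    (hconst : (fun x => g (f x)) =ᶠ[𝓝 s] fun _ => c) : f' = 0 := by
  have hcomp : HasDerivAt (fun x => g (f x)) (g' * f') s := hg.comp s hf
  have hzero : HasDerivAt (fun x => g (f x)) 0 s :=
    (hasDerivAt_const s c).congr_of_eventuallyEq hconst
  exact (mul_eq_zero.mp (hcomp.unique hzero)).resolve_left hg'

theorem stmt_18_general (I : Set ℝ) (hI : IsOpen I) (hI' : I.OrdConnected)
    (κ τ F kb tb : ℝ → ℝ)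
    (hκ : ∀ s ∈ I, κ s ≠ 0)
    (hF : ∀ s ∈ I, HasDerivAt F (τ s) s)
    (hcos : ∀ s ∈ I, Real.cos (F s) ≠ 0)
    (hkb : ∀ s ∈ I, kb s = κ s * Real.cos (F s))
    (htb : ∀ s ∈ I, tb s = -(κ s * Real.sin (F s))) :
    (∀ s ∈ I, τ s = 0) ↔ (∃ c : ℝ, ∀ s ∈ I, tb s / kb s = c) := by
  have hratio : ∀ s ∈ I, tb s / kb s = -tan (F s) := fun s hs => by
    rw [htb s hs, hkb s hs, neg_mul_sin_div_mul_cos (hκ s hs)]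
  constructor
  · intro hτ
    obtain ⟨a, hFa⟩ := hI.exists_is_const_of_deriv_eq_zero hI'.isPreconnected
      (fun x hx => (hF x hx).differentiableAt.differentiableWithinAt)
      (fun x hx => by rw [(hF x hx).deriv, hτ x hx, Pi.zero_apply])
    exact ⟨-tan a, fun s hs => by rw [hratio s hs, hFa s hs]⟩
  · rintro ⟨c, hc⟩ s hs
    refine (hF s hs).eq_zero_of_comp_eventuallyEq_const (c := -c)
      (hasDerivAt_tan (hcos s hs)) (one_div_ne_zero (pow_ne_zero 2 (hcos s hs))) ?_
    filter_upwards [hI.mem_nhds hs] with x hx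
    rw [← hc x hx, hratio x hx, neg_neg]

/-- Theorem 3.4 (analytic content): α is a plane curve iff its evolute-direction
curve is a general helix. -/
theorem stmt_18 (I : Set ℝ) (hI : IsOpen I) (hI' : I.OrdConnected)
    (κ τ F kb tb : ℝ → ℝ)
    (hκd : ∀ s ∈ I, DifferentiableAt ℝ κ s)
    (hτd : ∀ s ∈ I, DifferentiableAt ℝ τ s)
    (hκ : ∀ s ∈ I, κ s ≠ 0)
    (hF : ∀ s ∈ I, HasDerivAt F (τ s) s)
    (hcos : ∀ s ∈ I, Real.cos (F s) ≠ 0)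
    (hkb : ∀ s ∈ I, kb s = κ s * Real.cos (F s))
    (htb : ∀ s ∈ I, tb s = -(κ s * Real.sin (F s))) :
    (∀ s ∈ I, τ s = 0) ↔ (∃ c : ℝ, ∀ s ∈ I, tb s / kb s = c) :=
  stmt_18_general I hI hI' κ τ F kb tb hκ hF hcos hkb htb
end
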